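/- There exist κ > 0 and C > 0, depending only on c1, c2, σ0, σ1, such that for every Φ ∈ ℝ⁴ with |Φ| < 2κ and φ2 ≠ 0, the coefficient γ²₁₃(Φ) := −(λ1(Φ) − λ3(Φ)) · l2(Φ) · (Dr1(Φ) r3(Φ)) satisfies |γ²₁₃(Φ)| ≤ C; i.e., despite the factor 1/N(Φ) in l2 with N(Φ) → 0 as φ2 → 0, this coefficient remains uniformly bounded on the punctured ball. -/

import Mathlib

noncomputable section

open Real Matrix Set

namespace ElasticIP

/-- Euclidean norm on `ℝ⁴` (presented as `Fin 4 → ℝ`). -/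
def eucNorm4 (Φ : Fin 4 → ℝ) : ℝ := Real.sqrt (∑ i, (Φ i) ^ 2)

/-- `a(Φ) = c₁² + 2σ₀φ₁`. -/
def aF (c1 σ0 : ℝ) (Φ : Fin 4 → ℝ) : ℝ := c1 ^ 2 + 2 * σ0 * Φ 0

/-- `b(Φ) = c₂² + 2σ₁φ₁`. -/
def bF (c2 σ1 : ℝ) (Φ : Fin 4 → ℝ) : ℝ := c2 ^ 2 + 2 * σ1 * Φ 0

/-- `c(Φ) = 2σ₁φ₂`. -/
def cF (σ1 : ℝ) (Φ : Fin 4 → ℝ) : ℝ := 2 * σ1 * Φ 1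

/-- `Δ = (a-b)² + 4c²`. -/
def ΔF (c1 c2 σ0 σ1 : ℝ) (Φ : Fin 4 → ℝ) : ℝ :=
  (aF c1 σ0 Φ - bF c2 σ1 Φ) ^ 2 + 4 * cF σ1 Φ ^ 2

/-- The coefficient matrix `A(Φ)` of the first-order system. -/
def AM (c1 c2 σ0 σ1 : ℝ) (Φ : Fin 4 → ℝ) : Matrix (Fin 4) (Fin 4) ℝ :=
  !![0, 0, -1, 0;
     0, 0, 0, -1;
     -aF c1 σ0 Φ, -cF σ1 Φ, 0, 0;
     -cF σ1 Φ, -bF c2 σ1 Φ, 0, 0]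

/-- `λ₁ = √(((a+b)+√Δ)/2)`. -/
def lam1 (c1 c2 σ0 σ1 : ℝ) (Φ : Fin 4 → ℝ) : ℝ :=
  Real.sqrt ((aF c1 σ0 Φ + bF c2 σ1 Φ + Real.sqrt (ΔF c1 c2 σ0 σ1 Φ)) / 2)

/-- `λ₂ = √(((a+b)-√Δ)/2)`. -/
def lam2 (c1 c2 σ0 σ1 : ℝ) (Φ : Fin 4 → ℝ) : ℝ :=
  Real.sqrt ((aF c1 σ0 Φ + bF c2 σ1 Φ - Real.sqrt (ΔF c1 c2 σ0 σ1 Φ)) / 2)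

/-- `λ₃ = -λ₂`. -/
def lam3 (c1 c2 σ0 σ1 : ℝ) (Φ : Fin 4 → ℝ) : ℝ := - lam2 c1 c2 σ0 σ1 Φ

/-- `λ₄ = -λ₁`. -/
def lam4 (c1 c2 σ0 σ1 : ℝ) (Φ : Fin 4 → ℝ) : ℝ := - lam1 c1 c2 σ0 σ1 Φ

/-- Right eigenvector `r₁`. -/
def r1 (c1 c2 σ0 σ1 : ℝ) (Φ : Fin 4 → ℝ) : Fin 4 → ℝ :=
  ![(lam1 c1 c2 σ0 σ1 Φ ^ 2 - bF c2 σ1 Φ) / (2 * σ1),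
    Φ 1,
    -(lam1 c1 c2 σ0 σ1 Φ * (lam1 c1 c2 σ0 σ1 Φ ^ 2 - bF c2 σ1 Φ)) / (2 * σ1),
    -(lam1 c1 c2 σ0 σ1 Φ) * Φ 1]

/-- Right eigenvector `r₂`. -/
def r2 (c1 c2 σ0 σ1 : ℝ) (Φ : Fin 4 → ℝ) : Fin 4 → ℝ :=
  ![(lam2 c1 c2 σ0 σ1 Φ ^ 2 - bF c2 σ1 Φ) / (2 * σ1),
    Φ 1,
    -(lam2 c1 c2 σ0 σ1 Φ * (lam2 c1 c2 σ0 σ1 Φ ^ 2 - bF c2 σ1 Φ)) / (2 * σ1),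
    -(lam2 c1 c2 σ0 σ1 Φ) * Φ 1]

/-- Right eigenvector `r₃`. -/
def r3 (c1 c2 σ0 σ1 : ℝ) (Φ : Fin 4 → ℝ) : Fin 4 → ℝ :=
  ![(lam2 c1 c2 σ0 σ1 Φ ^ 2 - bF c2 σ1 Φ) / (2 * σ1),
    Φ 1,
    lam2 c1 c2 σ0 σ1 Φ * (lam2 c1 c2 σ0 σ1 Φ ^ 2 - bF c2 σ1 Φ) / (2 * σ1),
    lam2 c1 c2 σ0 σ1 Φ * Φ 1]

/-- Right eigenvector `r₄`. -/
def r4 (c1 c2 σ0 σ1 : ℝ) (Φ : Fin 4 → ℝ) : Fin 4 → ℝ :=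
  ![(lam1 c1 c2 σ0 σ1 Φ ^ 2 - bF c2 σ1 Φ) / (2 * σ1),
    Φ 1,
    lam1 c1 c2 σ0 σ1 Φ * (lam1 c1 c2 σ0 σ1 Φ ^ 2 - bF c2 σ1 Φ) / (2 * σ1),
    lam1 c1 c2 σ0 σ1 Φ * Φ 1]

/-- `K = (Δ + (a-b)√Δ)/(4σ₁²)`. -/
def KF (c1 c2 σ0 σ1 : ℝ) (Φ : Fin 4 → ℝ) : ℝ :=
  (ΔF c1 c2 σ0 σ1 Φ + (aF c1 σ0 Φ - bF c2 σ1 Φ) * Real.sqrt (ΔF c1 c2 σ0 σ1 Φ)) / (4 * σ1 ^ 2)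

/-- `N = (Δ - (a-b)√Δ)/(4σ₁²)`. -/
def NF (c1 c2 σ0 σ1 : ℝ) (Φ : Fin 4 → ℝ) : ℝ :=
  (ΔF c1 c2 σ0 σ1 Φ - (aF c1 σ0 Φ - bF c2 σ1 Φ) * Real.sqrt (ΔF c1 c2 σ0 σ1 Φ)) / (4 * σ1 ^ 2)

/-- Left eigenvector `l₁`. -/
def l1 (c1 c2 σ0 σ1 : ℝ) (Φ : Fin 4 → ℝ) : Fin 4 → ℝ :=
  (KF c1 c2 σ0 σ1 Φ)⁻¹ •
    ![(lam1 c1 c2 σ0 σ1 Φ ^ 2 - bF c2 σ1 Φ) / (2 * σ1),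
      Φ 1,
      -((lam1 c1 c2 σ0 σ1 Φ ^ 2 - bF c2 σ1 Φ) / (2 * σ1 * lam1 c1 c2 σ0 σ1 Φ)),
      -(Φ 1 / lam1 c1 c2 σ0 σ1 Φ)]

/-- Left eigenvector `l₂`. -/
def l2 (c1 c2 σ0 σ1 : ℝ) (Φ : Fin 4 → ℝ) : Fin 4 → ℝ :=
  (NF c1 c2 σ0 σ1 Φ)⁻¹ •
    ![(lam2 c1 c2 σ0 σ1 Φ ^ 2 - bF c2 σ1 Φ) / (2 * σ1),
      Φ 1,
      -((lam2 c1 c2 σ0 σ1 Φ ^ 2 - bF c2 σ1 Φ) / (2 * σ1 * lam2 c1 c2 σ0 σ1 Φ)),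
      -(Φ 1 / lam2 c1 c2 σ0 σ1 Φ)]

/-- Left eigenvector `l₃`. -/
def l3 (c1 c2 σ0 σ1 : ℝ) (Φ : Fin 4 → ℝ) : Fin 4 → ℝ :=
  (NF c1 c2 σ0 σ1 Φ)⁻¹ •
    ![(lam2 c1 c2 σ0 σ1 Φ ^ 2 - bF c2 σ1 Φ) / (2 * σ1),
      Φ 1,
      (lam2 c1 c2 σ0 σ1 Φ ^ 2 - bF c2 σ1 Φ) / (2 * σ1 * lam2 c1 c2 σ0 σ1 Φ),
      Φ 1 / lam2 c1 c2 σ0 σ1 Φ]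

/-- Left eigenvector `l₄`. -/
def l4 (c1 c2 σ0 σ1 : ℝ) (Φ : Fin 4 → ℝ) : Fin 4 → ℝ :=
  (KF c1 c2 σ0 σ1 Φ)⁻¹ •
    ![(lam1 c1 c2 σ0 σ1 Φ ^ 2 - bF c2 σ1 Φ) / (2 * σ1),
      Φ 1,
      (lam1 c1 c2 σ0 σ1 Φ ^ 2 - bF c2 σ1 Φ) / (2 * σ1 * lam1 c1 c2 σ0 σ1 Φ),
      Φ 1 / lam1 c1 c2 σ0 σ1 Φ]

/-- Indexed eigenvalues `λᵢ`, `i = 1,…,4` realised as `i : Fin 4`. -/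
def lamI (c1 c2 σ0 σ1 : ℝ) (i : Fin 4) (Φ : Fin 4 → ℝ) : ℝ :=
  match i with
  | 0 => lam1 c1 c2 σ0 σ1 Φ
  | 1 => lam2 c1 c2 σ0 σ1 Φ
  | 2 => lam3 c1 c2 σ0 σ1 Φ
  | 3 => lam4 c1 c2 σ0 σ1 Φ

/-- Indexed right eigenvectors `rᵢ`. -/
def rI (c1 c2 σ0 σ1 : ℝ) (i : Fin 4) (Φ : Fin 4 → ℝ) : Fin 4 → ℝ :=
  match i with
  | 0 => r1 c1 c2 σ0 σ1 Φ
  | 1 => r2 c1 c2 σ0 σ1 Φ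
  | 2 => r3 c1 c2 σ0 σ1 Φ
  | 3 => r4 c1 c2 σ0 σ1 Φ

/-- Indexed left eigenvectors `lᵢ`. -/
def lI (c1 c2 σ0 σ1 : ℝ) (i : Fin 4) (Φ : Fin 4 → ℝ) : Fin 4 → ℝ :=
  match i with
  | 0 => l1 c1 c2 σ0 σ1 Φ
  | 1 => l2 c1 c2 σ0 σ1 Φ
  | 2 => l3 c1 c2 σ0 σ1 Φ
  | 3 => l4 c1 c2 σ0 σ1 Φ

/-- Jacobian matrix of a map `ℝ⁴ → ℝ⁴`. -/
def jac (f : (Fin 4 → ℝ) → (Fin 4 → ℝ)) (Φ : Fin 4 → ℝ) : Matrix (Fin 4) (Fin 4) ℝ :=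
  fun i j => fderiv ℝ (fun Ψ => f Ψ i) Φ (Pi.single j 1)

/-- `cⁱᵢₘ(Φ) = ∇λᵢ(Φ) · rₘ(Φ)`. -/
def cCo (c1 c2 σ0 σ1 : ℝ) (i m : Fin 4) (Φ : Fin 4 → ℝ) : ℝ :=
  fderiv ℝ (lamI c1 c2 σ0 σ1 i) Φ (rI c1 c2 σ0 σ1 m Φ)

/-- `γⁱᵢₘ(Φ) = -(λᵢ-λₘ) lᵢ · (Drᵢ rₘ - Drₘ rᵢ)`. -/
def gammaII (c1 c2 σ0 σ1 : ℝ) (i m : Fin 4) (Φ : Fin 4 → ℝ) : ℝ :=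
  -(lamI c1 c2 σ0 σ1 i Φ - lamI c1 c2 σ0 σ1 m Φ) *
    (lI c1 c2 σ0 σ1 i Φ ⬝ᵥ
      (jac (rI c1 c2 σ0 σ1 i) Φ *ᵥ rI c1 c2 σ0 σ1 m Φ -
        jac (rI c1 c2 σ0 σ1 m) Φ *ᵥ rI c1 c2 σ0 σ1 i Φ))

/-- `γⁱₖₘ(Φ) = -(λₖ-λₘ) lᵢ · (Drₖ rₘ)`. -/
def gammaKM (c1 c2 σ0 σ1 : ℝ) (i k m : Fin 4) (Φ : Fin 4 → ℝ) : ℝ :=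
  -(lamI c1 c2 σ0 σ1 k Φ - lamI c1 c2 σ0 σ1 m Φ) *
    (lI c1 c2 σ0 σ1 i Φ ⬝ᵥ (jac (rI c1 c2 σ0 σ1 k) Φ *ᵥ rI c1 c2 σ0 σ1 m Φ))


/-!
Write `p = (λ₂² - b)/(2σ₁)` for the first coordinate of `r₃`. The normaliser is `N = -√Δ p / σ₁`,
and since `p (λ₂² - a)/(2σ₁) = φ₂²` (the characteristic equation `(λ² - a)(λ² - b) = c²` at `λ₂`),
the product `N l₂ · (Dr₁ r₃)` carries the same factor `p`, which tends to `0` with `φ₂`.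
Cancelling it leaves `γ²₁₃ = (λ₁ + λ₂) σ₁ / √Δ · E`, where `E` is built from `λ₁, λ₂, a, b` and first
derivatives of `λ₁`. This expression is continuous at `Φ = 0`, where `√Δ = c₁² - c₂² > 0` and
`λ₂ = c₂ > 0`, hence bounded on a small ball.
-/

open Filter Topology

variable {c1 c2 σ0 σ1 : ℝ} {Φ : Fin 4 → ℝ}

lemma norm_le_eucNorm4 (Φ : Fin 4 → ℝ) : ‖Φ‖ ≤ eucNorm4 Φ :=
  (pi_norm_le_iff_of_nonneg (Real.sqrt_nonneg _)).2 fun i =>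
    Real.abs_le_sqrt (Finset.single_le_sum (fun j _ => sq_nonneg (Φ j)) (Finset.mem_univ i))

lemma jac_mulVec (f : (Fin 4 → ℝ) → Fin 4 → ℝ) (Φ u : Fin 4 → ℝ) :
    jac f Φ *ᵥ u = fun i => fderiv ℝ (fun Ψ => f Ψ i) Φ u := by
  ext i
  conv_rhs => rw [pi_eq_sum_univ u, map_sum]
  simp only [jac, mulVec, dotProduct, map_smul, smul_eq_mul, mul_comm]
  refine Finset.sum_congr rfl fun j _ => ?_
  congr
  ext k
  simp [Pi.single_apply, eq_comm]

lemma ΔF_nonneg : 0 ≤ ΔF c1 c2 σ0 σ1 Φ := by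
  unfold ΔF; positivity

lemma ΔF_pos (hσ1 : σ1 ≠ 0) (hφ : Φ 1 ≠ 0) : 0 < ΔF c1 c2 σ0 σ1 Φ := by
  unfold ΔF cF; positivity

lemma sqrt_ΔF_lt (hlam2 : 0 < lam2 c1 c2 σ0 σ1 Φ) :
    √(ΔF c1 c2 σ0 σ1 Φ) < aF c1 σ0 Φ + bF c2 σ1 Φ := by
  have := Real.sqrt_pos.1 hlam2
  linarith

lemma lam2_sq (hlam2 : 0 < lam2 c1 c2 σ0 σ1 Φ) :
    lam2 c1 c2 σ0 σ1 Φ ^ 2 = (aF c1 σ0 Φ + bF c2 σ1 Φ - √(ΔF c1 c2 σ0 σ1 Φ)) / 2 :=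
  Real.sq_sqrt (Real.sqrt_pos.1 hlam2).le

lemma sqrt_ΔF_zero (hc2 : 0 ≤ c2) (hc12 : c2 ≤ c1) :
    √(ΔF c1 c2 σ0 σ1 0) = c1 ^ 2 - c2 ^ 2 := by
  have : c2 ^ 2 ≤ c1 ^ 2 := pow_le_pow_left₀ hc2 hc12 2
  simp [ΔF, aF, bF, cF, Real.sqrt_sq (sub_nonneg.2 this)]

lemma lam2_zero (hc2 : 0 ≤ c2) (hc12 : c2 ≤ c1) : lam2 c1 c2 σ0 σ1 0 = c2 := by
  rw [lam2, sqrt_ΔF_zero hc2 hc12]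
  simp [aF, bF, Real.sqrt_sq hc2]

@[fun_prop]
lemma continuous_lam1 : Continuous (lam1 c1 c2 σ0 σ1) := by
  unfold lam1 ΔF aF bF cF; fun_prop

@[fun_prop]
lemma continuous_lam2 : Continuous (lam2 c1 c2 σ0 σ1) := by
  unfold lam2 ΔF aF bF cF; fun_prop

lemma contDiffAt_lam1 {n : WithTop ℕ∞} (hΔ : ΔF c1 c2 σ0 σ1 Φ ≠ 0)
    (hab : 0 < aF c1 σ0 Φ + bF c2 σ1 Φ) : ContDiffAt ℝ n (lam1 c1 c2 σ0 σ1) Φ := by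
  have hsqrtΔ : ContDiffAt ℝ n (fun Ψ => √(ΔF c1 c2 σ0 σ1 Ψ)) Φ :=
    (Real.contDiffAt_sqrt hΔ).comp Φ (by unfold ΔF aF bF cF; fun_prop)
  have hsum : ContDiffAt ℝ n (fun Ψ => aF c1 σ0 Ψ + bF c2 σ1 Ψ) Φ := by
    unfold aF bF; fun_prop
  have harg : (aF c1 σ0 Φ + bF c2 σ1 Φ + √(ΔF c1 c2 σ0 σ1 Φ)) / 2 ≠ 0 := by positivity
  exact (Real.contDiffAt_sqrt harg).comp Φ ((hsum.add hsqrtΔ).div_const 2)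

def qF (c1 c2 σ0 σ1 : ℝ) (Φ : Fin 4 → ℝ) : ℝ := (lam1 c1 c2 σ0 σ1 Φ ^ 2 - bF c2 σ1 Φ) / (2 * σ1)

def pF (c1 c2 σ0 σ1 : ℝ) (Φ : Fin 4 → ℝ) : ℝ := (lam2 c1 c2 σ0 σ1 Φ ^ 2 - bF c2 σ1 Φ) / (2 * σ1)

def sF (c1 c2 σ0 σ1 : ℝ) (Φ : Fin 4 → ℝ) : ℝ := (lam2 c1 c2 σ0 σ1 Φ ^ 2 - aF c1 σ0 Φ) / (2 * σ1)

lemma contDiffAt_qF {n : WithTop ℕ∞} (hΔ : ΔF c1 c2 σ0 σ1 Φ ≠ 0)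
    (hab : 0 < aF c1 σ0 Φ + bF c2 σ1 Φ) : ContDiffAt ℝ n (qF c1 c2 σ0 σ1) Φ := by
  have hb : ContDiffAt ℝ n (bF c2 σ1) Φ := by unfold bF; fun_prop
  exact (((contDiffAt_lam1 hΔ hab).pow 2).sub hb).div_const _

lemma pF_mul_sF (hσ1 : σ1 ≠ 0) (hlam2 : 0 < lam2 c1 c2 σ0 σ1 Φ) :
    pF c1 c2 σ0 σ1 Φ * sF c1 c2 σ0 σ1 Φ = Φ 1 ^ 2 := by
  have hsq : √(ΔF c1 c2 σ0 σ1 Φ) ^ 2 = ΔF c1 c2 σ0 σ1 Φ := Real.sq_sqrt ΔF_nonneg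
  rw [pF, sF, lam2_sq hlam2]
  generalize √(ΔF c1 c2 σ0 σ1 Φ) = S at hsq ⊢
  rw [ΔF, cF] at hsq
  field_simp
  linear_combination hsq

lemma NF_eq (hσ1 : σ1 ≠ 0) (hlam2 : 0 < lam2 c1 c2 σ0 σ1 Φ) :
    NF c1 c2 σ0 σ1 Φ = -(√(ΔF c1 c2 σ0 σ1 Φ) * pF c1 c2 σ0 σ1 Φ) / σ1 := by
  have hsq : √(ΔF c1 c2 σ0 σ1 Φ) ^ 2 = ΔF c1 c2 σ0 σ1 Φ := Real.sq_sqrt ΔF_nonneg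
  rw [NF, pF, lam2_sq hlam2]
  generalize √(ΔF c1 c2 σ0 σ1 Φ) = S at hsq ⊢
  rw [← hsq]
  field_simp
  ring

lemma jac_r1_mulVec (hlam1 : DifferentiableAt ℝ (lam1 c1 c2 σ0 σ1) Φ) (u : Fin 4 → ℝ) :
    jac (r1 c1 c2 σ0 σ1) Φ *ᵥ u =
      ![fderiv ℝ (qF c1 c2 σ0 σ1) Φ u,
        u 1,
        -(lam1 c1 c2 σ0 σ1 Φ * fderiv ℝ (qF c1 c2 σ0 σ1) Φ u +
          qF c1 c2 σ0 σ1 Φ * fderiv ℝ (lam1 c1 c2 σ0 σ1) Φ u),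
        -(lam1 c1 c2 σ0 σ1 Φ * u 1 + Φ 1 * fderiv ℝ (lam1 c1 c2 σ0 σ1) Φ u)] := by
  have hq : DifferentiableAt ℝ (qF c1 c2 σ0 σ1) Φ := by unfold qF bF; fun_prop
  have hφ : DifferentiableAt ℝ (fun Ψ : Fin 4 → ℝ => Ψ 1) Φ := differentiableAt_apply 1 Φ
  have hDφ : fderiv ℝ (fun Ψ : Fin 4 → ℝ => Ψ 1) Φ u = u 1 := by
    rw [(hasFDerivAt_apply 1 Φ).fderiv]; rfl
  have hr1 : r1 c1 c2 σ0 σ1 = fun Ψ => ![qF c1 c2 σ0 σ1 Ψ, Ψ 1,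
      -(lam1 c1 c2 σ0 σ1 Ψ * qF c1 c2 σ0 σ1 Ψ), -(lam1 c1 c2 σ0 σ1 Ψ * Ψ 1)] := by
    funext Ψ i
    fin_cases i <;> simp [r1, qF, neg_div, mul_div_assoc]
  ext i
  fin_cases i <;> simp [jac_mulVec, hr1, fderiv_fun_neg, fderiv_fun_mul hlam1 hq,
    fderiv_fun_mul hlam1 hφ, hDφ]

def gammaReg (c1 c2 σ0 σ1 : ℝ) (Φ : Fin 4 → ℝ) : ℝ :=
  let v := fderiv ℝ (qF c1 c2 σ0 σ1) Φ (r3 c1 c2 σ0 σ1 Φ)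
  let w := fderiv ℝ (lam1 c1 c2 σ0 σ1) Φ (r3 c1 c2 σ0 σ1 Φ)
  (lam1 c1 c2 σ0 σ1 Φ + lam2 c1 c2 σ0 σ1 Φ) * σ1 / √(ΔF c1 c2 σ0 σ1 Φ) *
    (v + sF c1 c2 σ0 σ1 Φ + (lam1 c1 c2 σ0 σ1 Φ * v + qF c1 c2 σ0 σ1 Φ * w +
      sF c1 c2 σ0 σ1 Φ * (lam1 c1 c2 σ0 σ1 Φ + w)) / lam2 c1 c2 σ0 σ1 Φ)

lemma gamma_eq_gammaReg (hσ1 : σ1 ≠ 0) (hφ : Φ 1 ≠ 0) (hlam2 : 0 < lam2 c1 c2 σ0 σ1 Φ) :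
    -(lam1 c1 c2 σ0 σ1 Φ - lam3 c1 c2 σ0 σ1 Φ) *
        (l2 c1 c2 σ0 σ1 Φ ⬝ᵥ (jac (r1 c1 c2 σ0 σ1) Φ *ᵥ r3 c1 c2 σ0 σ1 Φ)) =
      gammaReg c1 c2 σ0 σ1 Φ := by
  have hΔ : 0 < ΔF c1 c2 σ0 σ1 Φ := ΔF_pos hσ1 hφ
  have hab : 0 < aF c1 σ0 Φ + bF c2 σ1 Φ := (Real.sqrt_nonneg _).trans_lt (sqrt_ΔF_lt hlam2)
  have hS : √(ΔF c1 c2 σ0 σ1 Φ) ≠ 0 := (Real.sqrt_pos.2 hΔ).ne'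
  have hps := pF_mul_sF hσ1 hlam2
  have hp : pF c1 c2 σ0 σ1 Φ ≠ 0 := by
    rintro hp
    rw [hp, zero_mul, eq_comm, pow_eq_zero_iff two_ne_zero] at hps
    exact hφ hps
  set v := fderiv ℝ (qF c1 c2 σ0 σ1) Φ (r3 c1 c2 σ0 σ1 Φ)
  set w := fderiv ℝ (lam1 c1 c2 σ0 σ1) Φ (r3 c1 c2 σ0 σ1 Φ)
  have hdot : l2 c1 c2 σ0 σ1 Φ ⬝ᵥ (jac (r1 c1 c2 σ0 σ1) Φ *ᵥ r3 c1 c2 σ0 σ1 Φ) =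
      (NF c1 c2 σ0 σ1 Φ)⁻¹ * (pF c1 c2 σ0 σ1 Φ * (v + sF c1 c2 σ0 σ1 Φ +
        (lam1 c1 c2 σ0 σ1 Φ * v + qF c1 c2 σ0 σ1 Φ * w +
          sF c1 c2 σ0 σ1 Φ * (lam1 c1 c2 σ0 σ1 Φ + w)) / lam2 c1 c2 σ0 σ1 Φ)) := by
    have hr3 : r3 c1 c2 σ0 σ1 Φ 1 = Φ 1 := rfl
    rw [jac_r1_mulVec ((contDiffAt_lam1 (n := 1) hΔ.ne' hab).differentiableAt one_ne_zero), l2]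
    simp only [dotProduct, Fin.sum_univ_four, Pi.smul_apply, smul_eq_mul, hr3, cons_val_zero,
      cons_val_one, cons_val]
    rw [pF] at hps ⊢
    linear_combination -(NF c1 c2 σ0 σ1 Φ)⁻¹ * (1 + (lam1 c1 c2 σ0 σ1 Φ + w) / lam2 c1 c2 σ0 σ1 Φ) * hps
  rw [hdot, NF_eq hσ1 hlam2, lam3, gammaReg]
  field_simp
  ring

lemma continuousAt_gammaReg (hΔ : ΔF c1 c2 σ0 σ1 Φ ≠ 0) (hlam2 : 0 < lam2 c1 c2 σ0 σ1 Φ) :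
    ContinuousAt (gammaReg c1 c2 σ0 σ1) Φ := by
  have hab : 0 < aF c1 σ0 Φ + bF c2 σ1 Φ := (Real.sqrt_nonneg _).trans_lt (sqrt_ΔF_lt hlam2)
  have hS : √(ΔF c1 c2 σ0 σ1 Φ) ≠ 0 := Real.sqrt_ne_zero'.2 (ΔF_nonneg.lt_of_ne' hΔ)
  have hr3 : Continuous (r3 c1 c2 σ0 σ1) := by
    refine continuous_pi fun i => ?_
    fin_cases i <;> simp only [r3] <;> unfold bF <;> fun_prop
  have hv : ContinuousAt (fun Ψ => fderiv ℝ (qF c1 c2 σ0 σ1) Ψ (r3 c1 c2 σ0 σ1 Ψ)) Φ :=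
    ((contDiffAt_qF hΔ hab).fderiv_right (m := 0) le_rfl).continuousAt.clm_apply hr3.continuousAt
  have hw : ContinuousAt (fun Ψ => fderiv ℝ (lam1 c1 c2 σ0 σ1) Ψ (r3 c1 c2 σ0 σ1 Ψ)) Φ :=
    ((contDiffAt_lam1 hΔ hab).fderiv_right (m := 0) le_rfl).continuousAt.clm_apply hr3.continuousAt
  have hsqrtΔ : Continuous fun Ψ => √(ΔF c1 c2 σ0 σ1 Ψ) := by unfold ΔF aF bF cF; fun_prop
  have hq : Continuous (qF c1 c2 σ0 σ1) := by unfold qF bF; fun_prop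
  have hs : Continuous (sF c1 c2 σ0 σ1) := by unfold sF aF; fun_prop
  have hlam1 : ContinuousAt (lam1 c1 c2 σ0 σ1) Φ := continuous_lam1.continuousAt
  exact (((hlam1.add continuous_lam2.continuousAt).mul continuousAt_const).div
      hsqrtΔ.continuousAt hS).mul ((hv.add hs.continuousAt).add
      ((((hlam1.mul hv).add (hq.continuousAt.mul hw)).add (hs.continuousAt.mul (hlam1.add hw))).div
        continuous_lam2.continuousAt hlam2.ne'))

/-- Uniform boundedness of the (potentially singular) coefficient
`γ²₁₃(Φ) = -(λ₁-λ₃) l₂ · (Dr₁(Φ) r₃(Φ))` on the punctured ball `{|Φ| < 2κ, φ₂ ≠ 0}`. -/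
theorem gamma_2_13_bounded (c1 c2 σ0 σ1 : ℝ) (hc2 : 0 < c2) (hc12 : c2 < c1) (hσ1 : σ1 ≠ 0) :
    ∃ κ > (0:ℝ), ∃ C > (0:ℝ), ∀ Φ : Fin 4 → ℝ, eucNorm4 Φ < 2 * κ → Φ 1 ≠ 0 →
      |(-(lam1 c1 c2 σ0 σ1 Φ - lam3 c1 c2 σ0 σ1 Φ)) *
          (l2 c1 c2 σ0 σ1 Φ ⬝ᵥ (jac (r1 c1 c2 σ0 σ1) Φ *ᵥ r3 c1 c2 σ0 σ1 Φ))| ≤ C := by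
  have hlam2 : 0 < lam2 c1 c2 σ0 σ1 0 := by rwa [lam2_zero hc2.le hc12.le]
  have hΔ : ΔF c1 c2 σ0 σ1 0 ≠ 0 := by
    rw [← Real.sqrt_ne_zero ΔF_nonneg, sqrt_ΔF_zero hc2.le hc12.le, sub_ne_zero]
    exact (pow_lt_pow_left₀ hc12 hc2.le two_ne_zero).ne'
  set C := |gammaReg c1 c2 σ0 σ1 0| + 1
  have hnear : ∀ᶠ Φ in 𝓝 0, 0 < lam2 c1 c2 σ0 σ1 Φ ∧ |gammaReg c1 c2 σ0 σ1 Φ| < C :=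
    (continuousAt_const.eventually_lt continuous_lam2.continuousAt hlam2).and
      ((continuousAt_gammaReg hΔ hlam2).abs.eventually_lt continuousAt_const (lt_add_one _))
  obtain ⟨ε, hε, hball⟩ := Metric.eventually_nhds_iff.1 hnear
  refine ⟨ε / 2, by positivity, C, by positivity, fun Φ hΦ hφ => ?_⟩
  have hdist : dist Φ 0 < ε := by
    rw [dist_zero_right]
    linarith [norm_le_eucNorm4 Φ]
  obtain ⟨hlam2Φ, hC⟩ := hball hdist
  rw [gamma_eq_gammaReg hσ1 hφ hlam2Φ]
  exact hC.le

end ElasticIP
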